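/- Let β > −1/2 be real, k ∈ ℕ, and let g_k(x) = √(k!/Γ(k+2β+1)) · x^β e^{−x/2} L_k^{(2β)}(x) be the k-th Laguerre function with parameter 2β on (0,∞). Then for every z ∈ ℂ with |z| < 1, (1−z)^{−(2β+1)} ∫_0^∞ g_k(x) · x^β e^{−(x/2)·(1+z)/(1−z)} dx = √(Γ(k+2β+1)/k!) · z^k. In other words, the Bergman transform of the unit disc maps the Laguerre functions to the monomials √(Γ(k+2β+1)/k!)·z^k. -/

import Mathlib

/-!
With `c = 1/(1-z)` (so `Re c > 0`) one has `e^{-x/2} e^{-(x/2)(1+z)/(1-z)} = e^{-cx}`, so the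
transform is `(1-z)^{-(2β+1)} √(k!/Γ(k+2β+1))` times the Laplace transform at `c` of
`x^α L_k^{(α)}(x)`, `α = 2β`. Expanding the Laguerre polynomial and using
`∫_0^∞ x^{s-1} e^{-cx} dx = Γ(s) c^{-s}` (for real `c` by scaling, for complex `c` by analytic
continuation in `c`), each `Γ(j+α+1)` cancels against the Laguerre coefficient, leaving a binomial
coefficient; the binomial theorem then gives `Γ(k+α+1)/k! · c^{-(α+1)} (1 - 1/c)^k`, which is
`Γ(k+2β+1)/k! · (1-z)^{2β+1} z^k`.
-/

open MeasureTheory Real Nat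

/-- The generalized Laguerre polynomial
`L_k^{(α)}(x) = Σ_{j=0}^{k} (Γ(k+α+1)/Γ(j+α+1)) · (−x)^j/((k−j)!·j!)`. -/
noncomputable def laguerre (α : ℝ) (k : ℕ) (x : ℝ) : ℝ :=
  ∑ j ∈ Finset.range (k + 1),
    Real.Gamma ((k : ℝ) + α + 1) / Real.Gamma ((j : ℝ) + α + 1) * (-x) ^ j /
      (((k - j)! : ℝ) * (j ! : ℝ))

/-- The `k`-th Laguerre function with parameter `2β` on `(0,∞)`:
`g_k(x) = √(k!/Γ(k+2β+1)) · x^β e^{−x/2} L_k^{(2β)}(x)`. -/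
noncomputable def laguerreFun (β : ℝ) (k : ℕ) (x : ℝ) : ℝ :=
  Real.sqrt ((k ! : ℝ) / Real.Gamma ((k : ℝ) + 2 * β + 1)) * x ^ β * Real.exp (-x / 2) *
    laguerre (2 * β) k x

open Set Filter Topology

lemma Complex.inv_re_pos {c : ℂ} (hc : 0 < c.re) : 0 < c⁻¹.re := by
  rw [Complex.inv_re]
  exact div_pos hc (Complex.normSq_pos.mpr (by rintro rfl; simp at hc))

lemma integrableOn_rpow_mul_exp_neg_mul {s b : ℝ} (hs : -1 < s) (hb : 0 < b) :
    IntegrableOn (fun x : ℝ => x ^ s * Real.exp (-b * x)) (Ioi 0) := by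
  simpa using integrableOn_rpow_mul_exp_neg_mul_rpow hs one_pos hb

lemma continuousOn_cpow_mul_exp_neg_mul (a c : ℂ) :
    ContinuousOn (fun x : ℝ => (x : ℂ) ^ a * Complex.exp (-(c * x))) (Ioi 0) := by
  refine ContinuousOn.mul (fun x hx => ?_) (by fun_prop)
  exact (Complex.continuousAt_ofReal_cpow_const x a (Or.inr hx.ne')).continuousWithinAt

lemma norm_cpow_mul_exp_neg_mul {x : ℝ} (hx : 0 < x) (a c : ℂ) :
    ‖(x : ℂ) ^ a * Complex.exp (-(c * x))‖ = x ^ a.re * Real.exp (-c.re * x) := by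
  simp [Complex.norm_cpow_eq_rpow_re_of_pos hx, Complex.norm_exp]

lemma integrableOn_cpow_mul_exp_neg_mul {a c : ℂ} (ha : -1 < a.re) (hc : 0 < c.re) :
    IntegrableOn (fun x : ℝ => (x : ℂ) ^ a * Complex.exp (-(c * x))) (Ioi 0) := by
  refine (integrableOn_rpow_mul_exp_neg_mul ha hc).mono'
    ((continuousOn_cpow_mul_exp_neg_mul a c).aestronglyMeasurable measurableSet_Ioi) ?_
  filter_upwards [ae_restrict_mem measurableSet_Ioi] with x hx
  rw [norm_cpow_mul_exp_neg_mul hx]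

lemma differentiableOn_integral_cpow_mul_exp_neg_mul {a : ℂ} (ha : -1 < a.re) :
    DifferentiableOn ℂ (fun c : ℂ => ∫ x in Ioi (0 : ℝ), (x : ℂ) ^ a * Complex.exp (-(c * x)))
      {c | 0 < c.re} := by
  intro c₀ (hc₀ : 0 < c₀.re)
  set ε := c₀.re / 2 with hεdef
  have hε : 0 < ε := half_pos hc₀
  have hre : ∀ c ∈ Metric.ball c₀ ε, ε ≤ c.re := fun c hc => by
    have := (Complex.abs_re_le_norm (c - c₀)).trans (mem_ball_iff_norm.mp hc).le
    rw [Complex.sub_re] at this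
    linarith [(abs_le.mp this).1, hεdef]
  refine (hasDerivAt_integral_of_dominated_loc_of_deriv_le (μ := volume.restrict (Ioi 0))
    (F' := fun c (x : ℝ) => (x : ℂ) ^ a * Complex.exp (-(c * x)) * -x)
    (bound := fun x => x ^ (a.re + 1) * Real.exp (-ε * x)) (Metric.ball_mem_nhds c₀ hε)
    (Eventually.of_forall fun c => (continuousOn_cpow_mul_exp_neg_mul a c).aestronglyMeasurable
      measurableSet_Ioi)
    (integrableOn_cpow_mul_exp_neg_mul ha hc₀) ?_ ?_
    (integrableOn_rpow_mul_exp_neg_mul (by linarith) hε) ?_).2.differentiableAt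
    |>.differentiableWithinAt
  · exact ((continuousOn_cpow_mul_exp_neg_mul a c₀).mul
      Complex.continuous_ofReal.neg.continuousOn).aestronglyMeasurable measurableSet_Ioi
  · filter_upwards [ae_restrict_mem measurableSet_Ioi] with x (hx : 0 < x) c hc
    rw [norm_mul, norm_cpow_mul_exp_neg_mul hx, norm_neg, Complex.norm_real,
      Real.norm_of_nonneg hx.le, Real.rpow_add_one hx.ne']
    have := Real.exp_le_exp.mpr (mul_le_mul_of_nonneg_right (neg_le_neg (hre c hc)) hx.le)
    rw [mul_right_comm]
    gcongr
  · refine Eventually.of_forall fun x c _ => ?_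
    simpa [mul_assoc] using
      (((hasDerivAt_id c).mul_const (x : ℂ)).neg.cexp).const_mul ((x : ℂ) ^ a)

lemma integral_cpow_mul_exp_neg_mul_Ioi_of_re_pos {a c : ℂ} (ha : 0 < a.re) (hc : 0 < c.re) :
    ∫ x in Ioi (0 : ℝ), (x : ℂ) ^ (a - 1) * Complex.exp (-(c * x)) =
      (1 / c) ^ a * Complex.Gamma a := by
  have hopen : IsOpen {c : ℂ | 0 < c.re} := isOpen_lt continuous_const Complex.continuous_re
  have hlhs := (differentiableOn_integral_cpow_mul_exp_neg_mul
    (by simpa using ha : -1 < (a - 1).re)).analyticOnNhd hopen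
  have hrhs : AnalyticOnNhd ℂ (fun c : ℂ => (1 / c) ^ a * Complex.Gamma a) {c | 0 < c.re} := by
    refine DifferentiableOn.analyticOnNhd (fun c (hc : 0 < c.re) => ?_) hopen
    have hc0 : c ≠ 0 := by rintro rfl; simp at hc
    have hslit : 0 < (1 / c).re := by rw [one_div]; exact Complex.inv_re_pos hc
    exact (((differentiableAt_const 1).div differentiableAt_id hc0).cpow
      (differentiableAt_const a) (Or.inl hslit)).mul_const _ |>.differentiableWithinAt
  -- both sides are holomorphic on `Re c > 0` and agree on the real points `c > 1`
  have hreal : Tendsto (fun r : ℝ => (r : ℂ)) (𝓝[>] 1) (𝓝[≠] 1) := by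
    refine tendsto_nhdsWithin_iff.mpr ⟨?_, eventually_nhdsWithin_of_forall fun r hr => ?_⟩
    · exact (Complex.continuous_ofReal.tendsto' 1 1 Complex.ofReal_one).mono_left
        nhdsWithin_le_nhds
    · simpa using hr.ne'
  refine hlhs.eqOn_of_preconnected_of_frequently_eq hrhs
    (convex_halfSpace_re_gt 0).isPreconnected (show 0 < (1 : ℂ).re by simp) ?_ hc
  refine hreal.frequently (Eventually.frequently (eventually_nhdsWithin_of_forall fun r hr => ?_))
  exact Complex.integral_cpow_mul_exp_neg_mul_Ioi ha (zero_lt_one.trans hr)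

lemma rpow_mul_laguerre_eq_sum {α x : ℝ} (hx : 0 < x) (k : ℕ) :
    x ^ α * laguerre α k x = ∑ j ∈ Finset.range (k + 1),
      Real.Gamma (k + α + 1) / Real.Gamma (j + α + 1) / ((k - j)! * j !) * (-1) ^ j *
        x ^ (α + j) := by
  simp_rw [laguerre, Finset.mul_sum, rpow_add hx, rpow_natCast, neg_pow x]
  exact Finset.sum_congr rfl fun j _ => by ring_nf

lemma Gamma_div_Gamma_div_factorial_mul_Gamma {α : ℝ} (hα : -1 < α) {j k : ℕ} (hjk : j ≤ k) :
    Real.Gamma (k + α + 1) / Real.Gamma (j + α + 1) / ((k - j)! * j !) * Real.Gamma (j + α + 1) =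
      Real.Gamma (k + α + 1) / k ! * k.choose j := by
  have hΓ : Real.Gamma (j + α + 1) ≠ 0 :=
    (Real.Gamma_pos_of_pos (by linarith [(Nat.cast_nonneg j : (0 : ℝ) ≤ j)])).ne'
  have hchoose : (k.choose j : ℝ) ≠ 0 := by exact_mod_cast (Nat.choose_pos hjk).ne'
  rw [← Nat.choose_mul_factorial_mul_factorial hjk]
  push_cast
  field_simp

lemma integral_rpow_mul_laguerre_mul_exp_neg_mul {α : ℝ} (hα : -1 < α) (k : ℕ) {c : ℂ}
    (hc : 0 < c.re) :
    ∫ x in Ioi (0 : ℝ), ((x ^ α * laguerre α k x : ℝ) : ℂ) * Complex.exp (-(c * x)) =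
      (Real.Gamma (k + α + 1) / k ! : ℝ) * (1 / c) ^ ((α : ℂ) + 1) * (1 - 1 / c) ^ k := by
  have hc0 : 1 / c ≠ 0 := one_div_ne_zero (by rintro rfl; simp at hc)
  obtain ⟨b, hb⟩ : ∃ b : ℕ → ℝ,
      ∀ j, b j = Real.Gamma (k + α + 1) / Real.Gamma (j + α + 1) / ((k - j)! * j !) :=
    ⟨_, fun _ => rfl⟩
  have hj : ∀ j : ℕ, 0 < (j : ℝ) + α + 1 := fun j => by
    linarith [(Nat.cast_nonneg j : (0 : ℝ) ≤ j)]
  calc _ = ∫ x in Ioi (0 : ℝ), ∑ j ∈ Finset.range (k + 1), ((b j * (-1) ^ j : ℝ) : ℂ) *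
        ((x : ℂ) ^ (((j + α + 1 : ℝ) : ℂ) - 1) * Complex.exp (-(c * x))) := by
        refine setIntegral_congr_fun measurableSet_Ioi fun x (hx : 0 < x) => ?_
        rw [rpow_mul_laguerre_eq_sum hx, Complex.ofReal_sum, Finset.sum_mul]
        refine Finset.sum_congr rfl fun j _ => ?_
        rw [show ((j + α + 1 : ℝ) : ℂ) - 1 = ((α + j : ℝ) : ℂ) by push_cast; ring,
          ← Complex.ofReal_cpow hx.le, hb]
        push_cast
        ring_nf
    _ = ∑ j ∈ Finset.range (k + 1), ((b j * (-1) ^ j : ℝ) : ℂ) *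
        ((1 / c) ^ ((j + α + 1 : ℝ) : ℂ) * Complex.Gamma ((j + α + 1 : ℝ) : ℂ)) := by
        have hint : ∀ j : ℕ, -1 < (((j + α + 1 : ℝ) : ℂ) - 1).re := fun j => by
          simp only [Complex.sub_re, Complex.ofReal_re, Complex.one_re]; linarith [hj j]
        rw [integral_finsetSum _ fun j _ =>
          (integrableOn_cpow_mul_exp_neg_mul (hint j) hc).const_mul _]
        refine Finset.sum_congr rfl fun j _ => ?_
        rw [integral_const_mul, integral_cpow_mul_exp_neg_mul_Ioi_of_re_pos (hj j) hc]
    _ = ∑ j ∈ Finset.range (k + 1), (Real.Gamma (k + α + 1) / k ! : ℝ) *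
        (1 / c) ^ ((α : ℂ) + 1) * ((-(1 / c)) ^ j * 1 ^ (k - j) * k.choose j) := by
        refine Finset.sum_congr rfl fun j hjk => ?_
        rw [Complex.Gamma_ofReal,
          show ((j + α + 1 : ℝ) : ℂ) = ((α : ℂ) + 1) + j by push_cast; ring,
          Complex.cpow_add _ _ hc0, Complex.cpow_natCast]
        have hbΓ : ((b j : ℝ) : ℂ) * (Real.Gamma (j + α + 1) : ℂ) =
            (Real.Gamma (k + α + 1) : ℂ) / k ! * k.choose j := by
          rw [hb]
          exact_mod_cast Gamma_div_Gamma_div_factorial_mul_Gamma hα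
            (Nat.lt_succ_iff.mp (Finset.mem_range.mp hjk))
        push_cast
        rw [one_pow, mul_one, neg_pow]
        linear_combination (1 / c) ^ ((α : ℂ) + 1) * (1 / c) ^ j * (-1 : ℂ) ^ j * hbΓ
    _ = _ := by rw [← Finset.mul_sum, ← add_pow, neg_add_eq_sub]

lemma neg_half_add_neg_half_mul_div {z : ℂ} (hz : z ≠ 1) (x : ℂ) :
    -x / 2 + -(x / 2) * (1 + z) / (1 - z) = -((1 - z)⁻¹ * x) := by
  have : 1 - z ≠ 0 := sub_ne_zero.mpr hz.symm
  field_simp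
  ring

lemma laguerreFun_mul_rpow_mul_exp {β x : ℝ} (hx : 0 < x) (k : ℕ) {z : ℂ} (hz : z ≠ 1) :
    (laguerreFun β k x : ℂ) * ((x ^ β : ℝ) : ℂ) *
        Complex.exp (-((x : ℂ) / 2) * (1 + z) / (1 - z)) =
      (√(k ! / Real.Gamma (k + 2 * β + 1)) : ℝ) *
        (((x ^ (2 * β) * laguerre (2 * β) k x : ℝ) : ℂ) * Complex.exp (-((1 - z)⁻¹ * x))) := by
  have hpow : x ^ (2 * β) = x ^ β * x ^ β := by rw [← Real.rpow_add hx, two_mul]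
  rw [← neg_half_add_neg_half_mul_div hz, Complex.exp_add, hpow, laguerreFun]
  push_cast
  ring

/-- The Bergman transform of the unit disc maps the Laguerre functions to monomials:
for `β > −1/2`, `k ∈ ℕ` and `|z| < 1`,
`(1−z)^{−(2β+1)} ∫_0^∞ g_k(x) x^β e^{−(x/2)(1+z)/(1−z)} dx = √(Γ(k+2β+1)/k!) · z^k`. -/
theorem bergmanTransform_laguerreFun (β : ℝ) (hβ : -(1 / 2) < β) (k : ℕ) (z : ℂ)
    (hz : ‖z‖ < 1) :
    (1 - z) ^ (-(2 * (β : ℂ) + 1)) *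
        ∫ x in Set.Ioi (0 : ℝ),
          ((laguerreFun β k x : ℝ) : ℂ) * (((x : ℝ) ^ β : ℝ) : ℂ) *
            Complex.exp (-((x : ℂ) / 2) * (1 + z) / (1 - z)) =
      ((Real.sqrt (Real.Gamma ((k : ℝ) + 2 * β + 1) / (k ! : ℝ)) : ℝ) : ℂ) * z ^ k := by
  have hz1 : z ≠ 1 := by rintro rfl; simp at hz
  have hc : 0 < ((1 - z)⁻¹).re :=
    Complex.inv_re_pos (by
      simp only [Complex.sub_re, Complex.one_re]; linarith [Complex.re_le_norm z])
  have hcpow : (1 - z) ^ (2 * (β : ℂ) + 1) ≠ 0 :=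
    Complex.cpow_ne_zero_iff.mpr (Or.inl (sub_ne_zero.mpr hz1.symm))
  have hsqrt : √(k ! / Real.Gamma (k + 2 * β + 1)) * (Real.Gamma (k + 2 * β + 1) / k !) =
      √(Real.Gamma (k + 2 * β + 1) / k !) := by
    rw [← inv_div (k ! : ℝ), ← div_eq_mul_inv, Real.sqrt_div_self, ← Real.sqrt_inv, inv_div]
  rw [setIntegral_congr_fun measurableSet_Ioi fun x hx => laguerreFun_mul_rpow_mul_exp hx k hz1,
    integral_const_mul, integral_rpow_mul_laguerre_mul_exp_neg_mul (by linarith) k hc, one_div,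
    inv_inv, sub_sub_cancel, ← hsqrt, Complex.cpow_neg]
  push_cast
  field_simp
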